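/- Let B be a division ring with center K (a field), and assume B is finite-dimensional as a K-vector space. Then the K-linear span of the set of all commutators {ab − ba : a, b ∈ B} is a proper K-subspace of B, i.e., it is not all of B. -/

import Mathlib

/-!
Let `K` be the center of `B`. The sandwich map `B ⊗[K] Bᵐᵒᵖ → End_K B`, `a ⊗ c ↦ (x ↦ a x c)`,
is injective by an Artin-type independence argument, hence bijective by counting dimensions.
For fixed `a`, the functional `c ↦ tr (x ↦ a x c)` satisfies `tr (x ↦ a x pq) = tr (x ↦ a x qp)`,
because both maps are products of `x ↦ a x q` and `x ↦ x p` in opposite orders; so it kills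
every commutator. If commutators spanned `B`, the trace would vanish on all sandwich maps, hence
on all of `End_K B`, whereas the trace of a nonzero finite free module is onto.
-/

open TensorProduct MulOpposite

theorem LinearMap.trace_surjective (R M : Type*) [CommRing R] [AddCommGroup M] [Module R M]
    [Module.Free R M] [Module.Finite R M] [Nontrivial M] :
    Function.Surjective (LinearMap.trace R M) := by
  classical
  let b := Module.Free.chooseBasis R M
  have : Nonempty (Module.Free.ChooseBasisIndex R M) := b.index_nonempty
  intro r
  obtain ⟨A, rfl⟩ := Matrix.trace_surjective (n := Module.Free.ChooseBasisIndex R M) r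
  exact ⟨Matrix.toLin b b A, by rw [LinearMap.trace_eq_matrix_trace R b, LinearMap.toMatrix_toLin]⟩

theorem Submodule.span_commutators_le_ker {R A M : Type*} [CommSemiring R] [Ring A] [Algebra R A]
    [AddCommGroup M] [Module R M] (φ : A →ₗ[R] M) (hφ : ∀ p q, φ (p * q) = φ (q * p)) :
    Submodule.span R {x : A | ∃ a b : A, x = a * b - b * a} ≤ LinearMap.ker φ := by
  rw [Submodule.span_le]
  rintro x ⟨p, q, rfl⟩
  simp [hφ p q]

section SurjectiveMulLeftRight
variable {K A : Type*} [Field K] [Ring A] [Algebra K A]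

theorem trace_mulLeftRight_tmul_op_mul_comm (a p q : A) :
    LinearMap.trace K A (AlgHom.mulLeftRight K A (a ⊗ₜ op (p * q))) =
      LinearMap.trace K A (AlgHom.mulLeftRight K A (a ⊗ₜ op (q * p))) := by
  have hpq : a ⊗ₜ[K] op (p * q) = (a ⊗ₜ op q) * (1 ⊗ₜ op p) := by simp
  have hqp : a ⊗ₜ[K] op (q * p) = (1 ⊗ₜ op p) * (a ⊗ₜ op q) := by simp
  rw [hpq, hqp, map_mul (AlgHom.mulLeftRight K A), map_mul (AlgHom.mulLeftRight K A),
    LinearMap.trace_mul_comm]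

theorem span_commutators_ne_top_of_surjective_mulLeftRight [FiniteDimensional K A] [Nontrivial A]
    (hM : Function.Surjective (AlgHom.mulLeftRight K A)) :
    Submodule.span K {x : A | ∃ a b : A, x = a * b - b * a} ≠ ⊤ := by
  intro htop
  set M := (AlgHom.mulLeftRight K A).toLinearMap
  have hvanish (a : A) : LinearMap.trace K A ∘ₗ M ∘ₗ TensorProduct.mk K A Aᵐᵒᵖ a ∘ₗ
      (opLinearEquiv K).toLinearMap = 0 := by
    rw [← LinearMap.ker_eq_top, ← top_le_iff, ← htop]
    exact Submodule.span_commutators_le_ker _ (trace_mulLeftRight_tmul_op_mul_comm a)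
  have htrace : LinearMap.trace K A ∘ₗ M = 0 :=
    TensorProduct.ext' fun a c => LinearMap.congr_fun (hvanish a) c.unop
  obtain ⟨f, hf⟩ := LinearMap.trace_surjective K A 1
  obtain ⟨t, rfl⟩ := hM f
  exact one_ne_zero (hf.symm.trans (LinearMap.congr_fun htrace t))

end SurjectiveMulLeftRight

namespace DivisionRing
variable {B : Type*} [DivisionRing B]

local notation "K" => Subring.center B

theorem eq_zero_of_forall_sum_mul_mul_eq_zero {ι : Type*} {b : ι → B}
    (hb : LinearIndependent K b) (s : Finset ι) (a : ι → B)
    (h : ∀ x, ∑ i ∈ s, a i * x * b i = 0) : ∀ i ∈ s, a i = 0 := by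
  classical
  induction s using Finset.strongInduction generalizing a with
  | H s ih =>
  by_contra! ⟨i₀, hi₀, hne⟩
  set a' := fun i => (a i₀)⁻¹ * a i with ha'
  have ha'i₀ : a' i₀ = 1 := inv_mul_cancel₀ hne
  have h' (x : B) : ∑ i ∈ s, a' i * x * b i = 0 := by
    simp only [ha', mul_assoc, ← Finset.mul_sum]
    simp only [← mul_assoc, h, mul_zero]
  -- commuting `y` through the relation kills the normalised `i₀`-term
  have hcomm (y : B) : ∀ i ∈ s.erase i₀, a' i * y - y * a' i = 0 := by
    refine ih _ (Finset.erase_ssubset hi₀) _ fun x => ?_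
    rw [Finset.sum_erase _ (by simp [ha'i₀])]
    simp only [sub_mul, mul_assoc, Finset.sum_sub_distrib, ← Finset.mul_sum]
    simpa [mul_assoc] using congr($(h' (y * x)) - y * $(h' x))
  have hcentral : ∀ i ∈ s, ∃ k : K, (k : B) = a' i := by
    intro i hi
    refine ⟨⟨a' i, Subring.mem_center_iff.mpr fun y => ?_⟩, rfl⟩
    rcases eq_or_ne i i₀ with rfl | hi'
    · simp [ha'i₀]
    · exact (sub_eq_zero.mp (hcomm y i (Finset.mem_erase.mpr ⟨hi', hi⟩))).symm
  choose! k hk using hcentral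
  have hrel : ∑ i ∈ s, k i • b i = 0 := by
    rw [← h' 1]
    refine Finset.sum_congr rfl fun i hi => ?_
    rw [Subring.smul_def, smul_eq_mul, hk i hi, mul_one]
  have := linearIndependent_iff'.mp hb s k hrel i₀ hi₀
  simp [← hk i₀ hi₀, this] at ha'i₀

theorem mulLeftRight_injective : Function.Injective (AlgHom.mulLeftRight K B) := by
  let b := Module.Free.chooseBasis K B
  rw [injective_iff_map_eq_zero]
  intro t ht
  obtain ⟨m, rfl⟩ := TensorProduct.eq_repr_basis_right b.mulOpposite t
  have hm (x : B) : ∑ i ∈ m.support, m i * x * b i = 0 := by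
    simpa [Finsupp.sum, AlgHom.mulLeftRight_apply] using LinearMap.congr_fun ht x
  have := eq_zero_of_forall_sum_mul_mul_eq_zero b.linearIndependent _ _ hm
  exact Finset.sum_eq_zero fun i hi => by rw [this i hi]; exact zero_tmul _ _

theorem mulLeftRight_surjective [FiniteDimensional K B] :
    Function.Surjective (AlgHom.mulLeftRight K B) := by
  have hdim : Module.finrank K (B ⊗[K] Bᵐᵒᵖ) = Module.finrank K (Module.End K B) := by
    rw [Module.finrank_tensorProduct, Module.finrank_linearMap, (opLinearEquiv K).finrank_eq]
  exact (LinearMap.injective_iff_surjective_of_finrank_eq_finrank hdim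
    (f := (AlgHom.mulLeftRight K B).toLinearMap)).mp mulLeftRight_injective

end DivisionRing

/-- Let `B` be a division ring with centre `K`, finite-dimensional over `K`.
Then the `K`-span of the set of commutators `a * b - b * a` is a proper
`K`-subspace of `B`. -/
theorem span_commutators_ne_top
    (B : Type*) [DivisionRing B]
    [FiniteDimensional (Subring.center B) B] :
    Submodule.span (Subring.center B) {x : B | ∃ a b : B, x = a * b - b * a} ≠ ⊤ :=
  span_commutators_ne_top_of_surjective_mulLeftRight DivisionRing.mulLeftRight_surjective
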